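/- arXiv:2310.07946 — 2 statements merged into one kernel-verified Lean document; each statement's English description precedes it below -/
import Mathlib

section
/- Define σ_x^± from the spin operators and a_x = e^{iπf_x}σ_x^−, a_x* = e^{−iπf_x}σ_x^+ for a family of real functions f_x ∈ C(Ω_{Λ∖{x}}). If for all x ≠ y the functions satisfy f_y^{g_x} − f_x − f_y + f_x^{g_y} ∈ 2ℤ + 1 (where f^g(σ) = f(gσ) and g_x is the spin flip at x), then the operators a_x satisfy the canonical anticommutation relations: {a_x*, a_y} = δ_{x,y}𝟙 and {a_x, a_y} = 0 for all x, y. -/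
/-!
Every operator involved is supported on a single spin flip: `a_x` and `a_x*` are the flip `g_x`
times a classical coefficient (here the independence of `f_x` from the spin at `x` enters), and
`(g A)(h B) = (g h)(A^h B)`. So both anticommutators are supported on `g_x g_y` and reduce to a
pointwise identity between coefficients. For `x = y` exactly one of the two products survives at
each configuration, with phases `e^{∓iπ f_x}` cancelling; for `x ≠ y` the two products live on the
same configurations and their phases differ by `e^{iπ(2m+1)} = -1`, which is the Jordan–Wigner
condition (at `σ` for `{a_x*, a_y}`, at `g_y σ` for `{a_x, a_y}`).
-/

open Function
open scoped Classical

namespace SpinFlipGroupoid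

/-- The spin-flip group ⊕_x {±1}. -/
def GFlip (ι : Type*) : Subgroup (ι → ℤˣ) where
  carrier := {g | (Function.mulSupport g).Finite}
  one_mem' := by simp [Function.mulSupport_one]
  mul_mem' := by
    intro a b ha hb
    exact (ha.union hb).subset (Function.mulSupport_mul a b)
  inv_mem' := by
    intro a ha
    simpa [Function.mulSupport_inv] using ha

variable {ι : Type*}

/-- The coordinatewise spin-flip action. -/
def act (g : GFlip ι) (σ : ι → ℤˣ) : ι → ℤˣ := fun y => (g : ι → ℤˣ) y * σ y

/-- The convolution product on the groupoid Ω ⋊ G. -/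
noncomputable def conv (f₁ f₂ : (ι → ℤˣ) × GFlip ι → ℂ) : (ι → ℤˣ) × GFlip ι → ℂ :=
  fun p => ∑ᶠ h : GFlip ι, f₁ (act (h⁻¹ * p.2) p.1, h) * f₂ (p.1, h⁻¹ * p.2)

/-- The identity 𝟙 of the convolution algebra. -/
noncomputable def one : (ι → ℤˣ) × GFlip ι → ℂ := fun p => if p.2 = 1 then 1 else 0

/-- Extension of a classical function to the groupoid. -/
noncomputable def ext (F : (ι → ℤˣ) → ℂ) : (ι → ℤˣ) × GFlip ι → ℂ :=
  fun p => F p.1 * (if p.2 = 1 then 1 else 0)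

/-- The spin flip at site x. -/
noncomputable def flip (x : ι) : GFlip ι :=
  ⟨fun y => if y = x then -1 else 1, by
    show (Function.mulSupport _).Finite
    refine Set.Finite.subset (Set.finite_singleton x) ?_
    intro y hy
    simp only [Function.mem_mulSupport, ne_eq] at hy
    by_contra hxy
    simp only [Set.mem_singleton_iff] at hxy
    exact hy (if_neg hxy)⟩

/-- σ_x^{(1)}(σ,g) = [g = flip at x]. -/
noncomputable def s1 (x : ι) : (ι → ℤˣ) × GFlip ι → ℂ :=
  fun p => if p.2 = flip x then 1 else 0

/-- The raising operator σ_x^+ = 𝟙_{σ_x = −1}·σ_x^{(1)}. -/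
noncomputable def sxp (x : ι) : (ι → ℤˣ) × GFlip ι → ℂ :=
  conv (ext fun σ => if σ x = -1 then 1 else 0) (s1 x)

/-- The lowering operator σ_x^− = 𝟙_{σ_x = +1}·σ_x^{(1)}. -/
noncomputable def sxm (x : ι) : (ι → ℤˣ) × GFlip ι → ℂ :=
  conv (ext fun σ => if σ x = 1 then 1 else 0) (s1 x)

/-- The annihilation operator a_x = e^{iπ f_x} σ_x^−. -/
noncomputable def ann (f : ι → ((ι → ℤˣ) → ℝ)) (x : ι) : (ι → ℤˣ) × GFlip ι → ℂ :=
  conv (ext fun σ => Complex.exp (Complex.I * Real.pi * (f x σ))) (sxm x)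

/-- The creation operator a_x* = e^{−iπ f_x} σ_x^+. -/
noncomputable def cre (f : ι → ((ι → ℤˣ) → ℝ)) (x : ι) : (ι → ℤˣ) × GFlip ι → ℂ :=
  conv (ext fun σ => Complex.exp (-(Complex.I * Real.pi * (f x σ)))) (sxp x)

theorem _root_.Complex.exp_add_exp_eq_zero_of_odd {u v : ℂ} (m : ℤ)
    (h : v - u = (2 * m + 1) * Real.pi * Complex.I) :
    Complex.exp u + Complex.exp v = 0 := by
  have hv : v = u + Real.pi * Complex.I + m * (2 * Real.pi * Complex.I) := by
    linear_combination h
  rw [hv, Complex.exp_add, Complex.exp_int_mul_two_pi_mul_I, Complex.exp_add_pi_mul_I]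
  ring

/-- In the paper's notation `single g A` is the operator `σ_g^{(1)} · A`. -/
noncomputable def single (g : GFlip ι) (A : (ι → ℤˣ) → ℂ) : (ι → ℤˣ) × GFlip ι → ℂ :=
  fun p => if p.2 = g then A p.1 else 0

lemma conv_single_single (g₁ g₂ : GFlip ι) (A B : (ι → ℤˣ) → ℂ) :
    conv (single g₁ A) (single g₂ B) = single (g₁ * g₂) fun σ => A (act g₂ σ) * B σ := by
  funext p
  rw [conv, finsum_eq_single _ g₁ fun h hne => by simp [single, hne]]
  by_cases hp : p.2 = g₁ * g₂
  · simp [single, hp]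
  · have hp' : g₁⁻¹ * p.2 ≠ g₂ := fun h => hp (by rw [← h, mul_inv_cancel_left])
    simp [single, hp, hp']

lemma single_add (g : GFlip ι) (A B : (ι → ℤˣ) → ℂ) :
    single g A + single g B = single g (A + B) := by
  funext p
  by_cases hp : p.2 = g <;> simp [single, hp]

lemma single_zero (g : GFlip ι) : single g (0 : (ι → ℤˣ) → ℂ) = 0 := by
  funext p
  simp [single]

lemma single_one_one : single (1 : GFlip ι) 1 = one := rfl

lemma ext_eq_single (F : (ι → ℤˣ) → ℂ) : ext F = single 1 F := by
  funext p
  by_cases hp : p.2 = 1 <;> simp [ext, single, hp]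

lemma s1_eq_single (x : ι) : s1 x = single (flip x) 1 := rfl

lemma flip_mul_self (x : ι) : (flip x : GFlip ι) * flip x = 1 := by
  ext y : 2
  by_cases h : y = x <;> simp [flip, h]

lemma act_one (σ : ι → ℤˣ) : act (1 : GFlip ι) σ = σ := by
  funext y
  simp [act]

lemma act_mul (g h : GFlip ι) (σ : ι → ℤˣ) : act (g * h) σ = act g (act h σ) := by
  funext y
  simp [act, mul_assoc]

lemma act_flip_self (x : ι) (σ : ι → ℤˣ) : act (flip x) σ x = -σ x := by
  simp [act, flip]

lemma act_flip_of_ne {x y : ι} (h : y ≠ x) (σ : ι → ℤˣ) : act (flip x) σ y = σ y := by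
  simp [act, flip, h]

lemma act_flip_flip (x : ι) (σ : ι → ℤˣ) : act (flip x) (act (flip x) σ) = σ := by
  rw [← act_mul, flip_mul_self, act_one]

lemma act_flip_comm (x y : ι) (σ : ι → ℤˣ) :
    act (flip x) (act (flip y) σ) = act (flip y) (act (flip x) σ) := by
  rw [← act_mul, mul_comm, act_mul]

section Coefficients

variable (f : ι → ((ι → ℤˣ) → ℝ))

noncomputable def annCoeff (x : ι) (σ : ι → ℤˣ) : ℂ :=
  if σ x = -1 then Complex.exp (Complex.I * Real.pi * f x σ) else 0

noncomputable def creCoeff (x : ι) (σ : ι → ℤˣ) : ℂ :=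
  if σ x = 1 then Complex.exp (-(Complex.I * Real.pi * f x σ)) else 0

variable {f}

lemma ann_eq_single {x : ι} (hx : ∀ σ, f x (act (flip x) σ) = f x σ) :
    ann f x = single (flip x) (annCoeff f x) := by
  rw [ann, sxm, ext_eq_single, ext_eq_single, s1_eq_single, conv_single_single,
    conv_single_single, one_mul, one_mul]
  congr 1
  funext σ
  rcases Int.units_eq_one_or (σ x) with h | h <;>
    simp [annCoeff, act_flip_self, hx, h]

lemma cre_eq_single {x : ι} (hx : ∀ σ, f x (act (flip x) σ) = f x σ) :
    cre f x = single (flip x) (creCoeff f x) := by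
  rw [cre, sxp, ext_eq_single, ext_eq_single, s1_eq_single, conv_single_single,
    conv_single_single, one_mul, one_mul]
  congr 1
  funext σ
  rcases Int.units_eq_one_or (σ x) with h | h <;>
    simp [creCoeff, act_flip_self, hx, h]

lemma creCoeff_anticomm_self {x : ι} (hx : ∀ σ, f x (act (flip x) σ) = f x σ) :
    ((fun σ => creCoeff f x (act (flip x) σ) * annCoeff f x σ) +
      fun σ => annCoeff f x (act (flip x) σ) * creCoeff f x σ) = 1 := by
  funext σ
  rcases Int.units_eq_one_or (σ x) with h | h <;>
    simp [creCoeff, annCoeff, act_flip_self, hx, h, ← Complex.exp_add]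

lemma annCoeff_flip_mul_self (x : ι) :
    (fun σ => annCoeff f x (act (flip x) σ) * annCoeff f x σ) = 0 := by
  funext σ
  rcases Int.units_eq_one_or (σ x) with h | h <;> simp [annCoeff, act_flip_self, h]

lemma creCoeff_annCoeff_anticomm {x y : ι} (hxy : x ≠ y)
    (hJW : ∀ σ, ∃ m : ℤ,
      f y (act (flip x) σ) - f x σ - f y σ + f x (act (flip y) σ) = 2 * m + 1) :
    ((fun σ => creCoeff f x (act (flip y) σ) * annCoeff f y σ) +
      fun σ => annCoeff f y (act (flip x) σ) * creCoeff f x σ) = 0 := by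
  funext σ
  obtain ⟨m, hm⟩ := hJW σ
  simp only [Pi.add_apply, Pi.zero_apply, creCoeff, annCoeff, act_flip_of_ne hxy,
    act_flip_of_ne hxy.symm]
  split_ifs <;> try simp
  have hmC := congrArg (fun r : ℝ => (r : ℂ)) hm
  push_cast at hmC
  rw [← Complex.exp_add, ← Complex.exp_add]
  exact Complex.exp_add_exp_eq_zero_of_odd m (by linear_combination (Real.pi * Complex.I) * hmC)

lemma annCoeff_anticomm {x y : ι} (hxy : x ≠ y)
    (hy : ∀ σ, f y (act (flip y) σ) = f y σ)
    (hJW : ∀ σ, ∃ m : ℤ,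
      f y (act (flip x) σ) - f x σ - f y σ + f x (act (flip y) σ) = 2 * m + 1) :
    ((fun σ => annCoeff f x (act (flip y) σ) * annCoeff f y σ) +
      fun σ => annCoeff f y (act (flip x) σ) * annCoeff f x σ) = 0 := by
  funext σ
  obtain ⟨m, hm⟩ := hJW (act (flip y) σ)
  rw [act_flip_comm, act_flip_flip, hy, hy] at hm
  simp only [Pi.add_apply, Pi.zero_apply, annCoeff, act_flip_of_ne hxy,
    act_flip_of_ne hxy.symm]
  split_ifs <;> try simp
  have hmC := congrArg (fun r : ℝ => (r : ℂ)) hm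
  push_cast at hmC
  rw [← Complex.exp_add, ← Complex.exp_add]
  exact Complex.exp_add_exp_eq_zero_of_odd m (by linear_combination (Real.pi * Complex.I) * hmC)

end Coefficients

/-- If each f_x does not depend on the spin at x and the family satisfies the
Jordan–Wigner condition f_y^{g_x} − f_x − f_y + f_x^{g_y} ∈ 2ℤ+1 (x ≠ y), then
the operators a_x = e^{iπf_x}σ_x^−, a_x* = e^{−iπf_x}σ_x^+ satisfy the CAR:
{a_x*, a_y} = δ_{x,y}𝟙 and {a_x, a_y} = 0. -/
theorem jordan_wigner_CAR (f : ι → ((ι → ℤˣ) → ℝ))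
    (hindep : ∀ (x : ι) (σ τ : ι → ℤˣ), (∀ y, y ≠ x → σ y = τ y) → f x σ = f x τ)
    (hJW : ∀ x y : ι, x ≠ y → ∀ σ : ι → ℤˣ, ∃ m : ℤ,
      f y (act (flip x) σ) - f x σ - f y σ + f x (act (flip y) σ) = 2 * m + 1) :
    ∀ x y : ι,
      conv (cre f x) (ann f y) + conv (ann f y) (cre f x) =
        (if x = y then one else 0) ∧
      conv (ann f x) (ann f y) + conv (ann f y) (ann f x) = 0 := by
  have hflip (x : ι) (σ : ι → ℤˣ) : f x (act (flip x) σ) = f x σ :=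
    hindep x _ _ fun y hy => act_flip_of_ne hy σ
  intro x y
  simp only [ann_eq_single (hflip _), cre_eq_single (hflip _), conv_single_single,
    mul_comm (flip y) (flip x), single_add]
  by_cases hxy : x = y
  · subst hxy
    rw [flip_mul_self, creCoeff_anticomm_self (hflip x), annCoeff_flip_mul_self, add_zero,
      single_zero, if_pos rfl]
    exact ⟨single_one_one, rfl⟩
  · rw [creCoeff_annCoeff_anticomm hxy (hJW x y hxy),
      annCoeff_anticomm hxy (hflip y) (hJW x y hxy), single_zero, if_neg hxy]
    exact ⟨rfl, rfl⟩

end SpinFlipGroupoid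
end

section
/- Let φ be an interaction with ‖φ‖_λ < ∞ and let D^φ(f) = i Σ_{X∩Λ≠∅} [φ_X, f] for f localized in a finite set Λ. Then the iterated derivation satisfies ‖(D^φ)^n(f)‖ ≤ (2‖φ‖_λ/λ)^n · n! · e^{λ|Λ|} · ‖f‖ for all n ≥ 1; in particular the series Σ_n t^n (D^φ)^n(f)/n! has radius of convergence at least λ/(2‖φ‖_λ). -/
/-!
Expanding the nested commutators writes `(D^φ)ⁿ f` as a sum, over sequences `X₁, …, Xₙ`, of
`iⁿ [φ_{Xₙ}, …, [φ_{X₁}, f]]`. By locality such a term vanishes unless every `Xⱼ` meets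
`Λ ∪ X₁ ∪ ⋯ ∪ Xⱼ₋₁`, and its norm is at most `2ⁿ ‖f‖ ∏ⱼ ‖φ_{Xⱼ}‖`. Weighted by `e^{λ(|X|-1)}`,
the sets meeting a region `S` contribute at most `|S| ‖φ‖_λ`. The factors `|S|` are absorbed by
proving, by induction on `n` and for all `k` at once,
`∑ (chain weight) (λ|U|)ᵏ ≤ (n+k)! (‖φ‖_λ/λ)ⁿ e^{λ|Λ|}` with `U` the union of the chain: the
case `n = 0` is `xᵏ ≤ k! eˣ`, and a step trades the factor `λ|S| ≤ λ|U|` for one more power.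
Taking `k = 0` gives the estimate, and the power series is then dominated by a geometric series.
-/

namespace Interactions

variable {d : ℕ} {A : Type*} [NormedRing A] [StarRing A] [NormedAlgebra ℂ A]

/-- The coefficient sup_x Σ_{X∋x, |X|=n+1} ‖φ_X‖. -/
noncomputable def bnd (φ : Finset (Fin d → ℤ) → A) (n : ℕ) : ℝ :=
  ⨆ x : Fin d → ℤ, ∑' X : {X : Finset (Fin d → ℤ) // x ∈ X ∧ X.card = n + 1}, ‖φ X.1‖

/-- The interaction norm ‖φ‖_λ = Σ_{n≥0} e^{λn} sup_x Σ_{X∋x,|X|=n+1} ‖φ_X‖. -/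
noncomputable def normL (lam : ℝ) (φ : Finset (Fin d → ℤ) → A) : ℝ :=
  ∑' n : ℕ, Real.exp (lam * n) * bnd φ n

/-- The iterates of the derivation D^φ(f) = i Σ_X [φ_X, f]. -/
noncomputable def Diter (φ : Finset (Fin d → ℤ) → A) : ℕ → A → A
  | 0 => fun f => f
  | n + 1 => fun f =>
      Complex.I • ∑' X : Finset (Fin d → ℤ), (φ X * Diter φ n f - Diter φ n f * φ X)

open scoped ENNReal
open Finset

section Chains

variable {V : Type*} [DecidableEq V]

def chainSupport {n : ℕ} (S : Finset V) (Xs : Fin n → Finset V) : Finset V :=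
  S ∪ univ.biUnion Xs

lemma subset_chainSupport {n : ℕ} (S : Finset V) (Xs : Fin n → Finset V) :
    S ⊆ chainSupport S Xs :=
  subset_union_left

@[simp]
lemma chainSupport_elim0 (S : Finset V) (Xs : Fin 0 → Finset V) : chainSupport S Xs = S := by
  simp [chainSupport]

lemma chainSupport_cons {n : ℕ} (S X : Finset V) (Xs : Fin n → Finset V) :
    chainSupport S (Fin.cons X Xs : Fin (n + 1) → Finset V) = chainSupport (S ∪ X) Xs := by
  ext; simp [chainSupport, Fin.exists_fin_succ]

lemma chainSupport_snoc {n : ℕ} (S X : Finset V) (Xs : Fin n → Finset V) :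
    chainSupport S (Fin.snoc Xs X : Fin (n + 1) → Finset V) = chainSupport S Xs ∪ X := by
  ext; simp [chainSupport, Fin.exists_fin_succ', or_comm]

/-- The weight `∏ⱼ w Xⱼ` of a chain `X₁, …, Xₙ` in which every `Xⱼ` meets `S ∪ X₁ ∪ ⋯ ∪ Xⱼ₋₁`,
and `0` for any other sequence. -/
noncomputable def chainWeight (w : Finset V → ℝ≥0∞) :
    (n : ℕ) → Finset V → (Fin n → Finset V) → ℝ≥0∞
  | 0, _, _ => 1
  | n + 1, S, Xs =>
      (if Disjoint (Xs 0) S then 0 else w (Xs 0)) * chainWeight w n (S ∪ Xs 0) (Fin.tail Xs)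

variable (w : Finset V → ℝ≥0∞)

lemma chainWeight_cons {n : ℕ} (S X : Finset V) (Xs : Fin n → Finset V) :
    chainWeight w (n + 1) S (Fin.cons X Xs) =
      (if Disjoint X S then 0 else w X) * chainWeight w n (S ∪ X) Xs := by
  simp [chainWeight]

lemma chainWeight_snoc :
    ∀ {n : ℕ} (S X : Finset V) (Xs : Fin n → Finset V),
      chainWeight w (n + 1) S (Fin.snoc Xs X) =
        chainWeight w n S Xs * (if Disjoint X (chainSupport S Xs) then 0 else w X)
  | 0, S, X, Xs => by
    have : (Fin.snoc Xs X : Fin 1 → Finset V) = Fin.cons X Xs := by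
      ext i : 1; fin_cases i; rfl
    simp [this, chainWeight, mul_comm]
  | n + 1, S, X, Xs => by
    induction Xs using Fin.consCases with
    | cons Y Ys =>
      rw [← Fin.cons_snoc_eq_snoc_cons, chainWeight_cons, chainWeight_snoc, chainWeight_cons,
        chainSupport_cons, mul_assoc]

lemma tsum_chainWeight_succ {n : ℕ} (S : Finset V) (F : Finset V → ℝ≥0∞) :
    ∑' Xs : Fin (n + 1) → Finset V, chainWeight w (n + 1) S Xs * F (chainSupport S Xs) =
      ∑' X, (if Disjoint X S then 0 else w X) *
        ∑' Xs : Fin n → Finset V, chainWeight w n (S ∪ X) Xs * F (chainSupport (S ∪ X) Xs) := by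
  rw [← (Fin.consEquiv fun _ => Finset V).tsum_eq, ENNReal.tsum_prod']
  refine tsum_congr fun X => ?_
  rw [← ENNReal.tsum_mul_left]
  refine tsum_congr fun Xs => ?_
  rw [show (Fin.consEquiv fun _ => Finset V) (X, Xs) = Fin.cons X Xs from rfl, chainWeight_cons,
    chainSupport_cons, mul_assoc]

end Chains

section ChainBound

variable {V : Type*} [DecidableEq V]

/-- The factor `e^{λ(|X|-1)}` with which `X` enters `‖φ‖_λ`. -/
noncomputable def expSizeWeight (lam : ℝ) (X : Finset V) : ℝ≥0∞ :=
  ENNReal.ofReal (Real.exp (lam * (#X - 1 : ℕ)))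

lemma card_union_le_of_not_disjoint {S X : Finset V} (h : ¬Disjoint X S) :
    #(S ∪ X) ≤ #S + (#X - 1) := by
  have hmeet : 0 < #(S ∩ X) := card_pos.2 (not_disjoint_iff_nonempty_inter.1 fun h' => h h'.symm)
  have := card_union_add_card_inter S X
  omega

lemma ofReal_exp_card_union_le {lam : ℝ} (hlam : 0 ≤ lam) {S X : Finset V}
    (h : ¬Disjoint X S) :
    ENNReal.ofReal (Real.exp (lam * #(S ∪ X))) ≤
      ENNReal.ofReal (Real.exp (lam * #S)) * expSizeWeight lam X := by
  rw [expSizeWeight, ← ENNReal.ofReal_mul (Real.exp_pos _).le, ← Real.exp_add, ← mul_add]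
  gcongr
  exact_mod_cast card_union_le_of_not_disjoint h

variable (w : Finset V → ℝ≥0∞) {lam : ℝ} {K : ℝ≥0∞}

lemma tsum_not_disjoint_le
    (hK : ∀ x, ∑' X : Finset V, (if x ∈ X then w X * expSizeWeight lam X else 0) ≤ K)
    (S : Finset V) :
    ∑' X : Finset V, (if Disjoint X S then 0 else w X * expSizeWeight lam X) ≤ #S * K := by
  calc _ ≤ ∑' X : Finset V, ∑ x ∈ S, (if x ∈ X then w X * expSizeWeight lam X else 0) := by
        refine ENNReal.tsum_le_tsum fun X => ?_
        split_ifs with hXS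
        · exact zero_le
        · obtain ⟨x, hxX, hxS⟩ := not_disjoint_iff.1 hXS
          exact (if_pos hxX).symm.le.trans <|
            single_le_sum (f := fun x => if x ∈ X then w X * expSizeWeight lam X else 0)
              (fun _ _ => zero_le) hxS
    _ = ∑ x ∈ S, ∑' X : Finset V, (if x ∈ X then w X * expSizeWeight lam X else 0) :=
        Summable.tsum_finsetSum fun _ _ => ENNReal.summable
    _ ≤ ∑ _x ∈ S, K := sum_le_sum fun x _ => hK x
    _ = #S * K := by rw [sum_const, nsmul_eq_mul]

lemma pow_le_factorial_mul_ofReal_exp {x : ℝ} (hx : 0 ≤ x) (k : ℕ) :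
    ENNReal.ofReal x ^ k ≤ k.factorial * ENNReal.ofReal (Real.exp x) := by
  have hexp := Real.pow_div_factorial_le_exp x hx k
  rw [div_le_iff₀' (by positivity)] at hexp
  rw [← ENNReal.ofReal_pow hx, ← ENNReal.ofReal_natCast, ← ENNReal.ofReal_mul (by positivity)]
  exact ENNReal.ofReal_le_ofReal hexp

lemma mul_tsum_chainWeight_mul_pow_le {S T : Finset V} (hST : S ⊆ T) (n k : ℕ) :
    ENNReal.ofReal lam * #S * ∑' Xs : Fin n → Finset V,
        chainWeight w n T Xs * (ENNReal.ofReal lam * #(chainSupport T Xs)) ^ k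
      ≤ ∑' Xs : Fin n → Finset V,
        chainWeight w n T Xs * (ENNReal.ofReal lam * #(chainSupport T Xs)) ^ (k + 1) := by
  rw [← ENNReal.tsum_mul_left]
  refine ENNReal.tsum_le_tsum fun Xs => ?_
  calc _ ≤ ENNReal.ofReal lam * #(chainSupport T Xs) *
        (chainWeight w n T Xs * (ENNReal.ofReal lam * #(chainSupport T Xs)) ^ k) := by
        gcongr
        exact hST.trans (subset_chainSupport _ _)
    _ = _ := by ring

theorem tsum_chainWeight_mul_pow_le (hlam : 0 < lam)
    (hK : ∀ x, ∑' X : Finset V, (if x ∈ X then w X * expSizeWeight lam X else 0) ≤ K)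
    (n k : ℕ) (S : Finset V) :
    ∑' Xs : Fin n → Finset V,
        chainWeight w n S Xs * (ENNReal.ofReal lam * #(chainSupport S Xs)) ^ k
      ≤ (n + k).factorial * (K / ENNReal.ofReal lam) ^ n *
        ENNReal.ofReal (Real.exp (lam * #S)) := by
  induction n generalizing k S with
  | zero =>
    simpa [chainWeight, tsum_fintype, ENNReal.ofReal_mul hlam.le] using
      pow_le_factorial_mul_ofReal_exp (x := lam * #S) (by positivity) k
  | succ n ih =>
    rcases S.eq_empty_or_nonempty with rfl | hS
    · simp [tsum_chainWeight_succ w ∅ fun U => (ENNReal.ofReal lam * #U) ^ k]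
    set L := ENNReal.ofReal lam
    set C := (n + 1 + k).factorial * (K / L) ^ n * ENNReal.ofReal (Real.exp (lam * #S))
    have hL : L ≠ 0 := (ENNReal.ofReal_pos.2 hlam).ne'
    have hc : L * #S ≠ 0 := mul_ne_zero hL (by simpa using hS.ne_empty)
    have hc' : L * #S ≠ ⊤ := ENNReal.mul_ne_top ENNReal.ofReal_ne_top (ENNReal.natCast_ne_top _)
    have hstep : ∀ X, L * #S * ((if Disjoint X S then 0 else w X) * ∑' Xs : Fin n → Finset V,
          chainWeight w n (S ∪ X) Xs * (L * #(chainSupport (S ∪ X) Xs)) ^ k)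
        ≤ (if Disjoint X S then 0 else w X * expSizeWeight lam X) * C := by
      intro X
      split_ifs with hX
      · simp
      calc _ = w X * (L * #S * ∑' Xs : Fin n → Finset V,
              chainWeight w n (S ∪ X) Xs * (L * #(chainSupport (S ∪ X) Xs)) ^ k) := by ring
        _ ≤ w X * ((n + (k + 1)).factorial * (K / L) ^ n *
              ENNReal.ofReal (Real.exp (lam * #(S ∪ X)))) := by
            exact mul_le_mul_right
              ((mul_tsum_chainWeight_mul_pow_le w subset_union_left n k).trans (ih _ _)) _
        _ ≤ w X * ((n + (k + 1)).factorial * (K / L) ^ n *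
              (ENNReal.ofReal (Real.exp (lam * #S)) * expSizeWeight lam X)) := by
            gcongr
            exact ofReal_exp_card_union_le hlam.le hX
        _ = w X * expSizeWeight lam X * C := by
            simp only [C, show n + (k + 1) = n + 1 + k by omega]
            ring
    rw [← ENNReal.mul_le_mul_iff_right hc hc', tsum_chainWeight_succ w S fun U => (L * #U) ^ k,
      ← ENNReal.tsum_mul_left]
    calc _ ≤ (∑' X : Finset V, (if Disjoint X S then 0 else w X * expSizeWeight lam X)) * C := by
          rw [← ENNReal.tsum_mul_right]
          exact ENNReal.tsum_le_tsum hstep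
      _ ≤ #S * K * C := by gcongr; exact tsum_not_disjoint_le w hK S
      _ = L * #S * ((n + 1 + k).factorial * (K / L) ^ (n + 1) *
            ENNReal.ofReal (Real.exp (lam * #S))) := by
          conv_lhs => rw [← ENNReal.mul_div_cancel hL ENNReal.ofReal_ne_top (b := K)]
          ring

end ChainBound

lemma ite_mem_eq_tsum_ite_card {V : Type*} [DecidableEq V] (x : V) (X : Finset V) (c : ℕ → ℝ≥0∞) :
    (if x ∈ X then c (#X - 1) else 0) = ∑' m : ℕ, if x ∈ X ∧ #X = m + 1 then c m else 0 := by
  by_cases hx : x ∈ X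
  · have hcard : ∀ m, #X = m + 1 ↔ m = #X - 1 := by
      have := card_pos.2 ⟨x, hx⟩
      omega
    simp [hx, hcard]
  · simp [hx]

section InteractionNorm

variable {𝔄 : Type*} [NormedRing 𝔄] (φ : Finset (Fin d → ℤ) → 𝔄)

lemma bnd_nonneg
    (hbdd : ∀ n : ℕ, BddAbove (Set.range fun x : Fin d → ℤ =>
      ∑' X : {X : Finset (Fin d → ℤ) // x ∈ X ∧ X.card = n + 1}, ‖φ X.1‖)) (n : ℕ) :
    0 ≤ bnd φ n :=
  (tsum_nonneg fun _ => norm_nonneg _).trans (le_ciSup (hbdd n) 0)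

lemma normL_nonneg
    (hbdd : ∀ n : ℕ, BddAbove (Set.range fun x : Fin d → ℤ =>
      ∑' X : {X : Finset (Fin d → ℤ) // x ∈ X ∧ X.card = n + 1}, ‖φ X.1‖)) (lam : ℝ) :
    0 ≤ normL lam φ :=
  tsum_nonneg fun n => mul_nonneg (Real.exp_pos _).le (bnd_nonneg φ hbdd n)

lemma tsum_ite_card_eq_le_bnd
    (hsum : ∀ (x : Fin d → ℤ) (n : ℕ),
      Summable fun X : {X : Finset (Fin d → ℤ) // x ∈ X ∧ X.card = n + 1} => ‖φ X.1‖)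
    (hbdd : ∀ n : ℕ, BddAbove (Set.range fun x : Fin d → ℤ =>
      ∑' X : {X : Finset (Fin d → ℤ) // x ∈ X ∧ X.card = n + 1}, ‖φ X.1‖))
    (x : Fin d → ℤ) (m : ℕ) :
    ∑' X : Finset (Fin d → ℤ), (if x ∈ X ∧ #X = m + 1 then ‖φ X‖ₑ else 0)
      ≤ ENNReal.ofReal (bnd φ m) := by
  calc _ = ∑' X : {X : Finset (Fin d → ℤ) // x ∈ X ∧ X.card = m + 1}, ‖φ X.1‖ₑ := by
        refine ((_root_.tsum_subtype {X | x ∈ X ∧ #X = m + 1} fun X => ‖φ X‖ₑ).trans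
          (tsum_congr fun X => ?_)).symm
        simp only [Set.indicator_apply, Set.mem_ofPred_eq]
    _ = ENNReal.ofReal (∑' X : {X : Finset (Fin d → ℤ) // x ∈ X ∧ X.card = m + 1}, ‖φ X.1‖) := by
        simp only [← ofReal_norm]
        rw [ENNReal.ofReal_tsum_of_nonneg (fun _ => norm_nonneg _) (hsum x m)]
    _ ≤ ENNReal.ofReal (bnd φ m) := ENNReal.ofReal_le_ofReal (le_ciSup (hbdd m) x)

lemma tsum_ite_mem_le_normL {lam : ℝ}
    (hsum : ∀ (x : Fin d → ℤ) (n : ℕ),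
      Summable fun X : {X : Finset (Fin d → ℤ) // x ∈ X ∧ X.card = n + 1} => ‖φ X.1‖)
    (hbdd : ∀ n : ℕ, BddAbove (Set.range fun x : Fin d → ℤ =>
      ∑' X : {X : Finset (Fin d → ℤ) // x ∈ X ∧ X.card = n + 1}, ‖φ X.1‖))
    (hnorm : Summable fun n : ℕ => Real.exp (lam * n) * bnd φ n) (x : Fin d → ℤ) :
    ∑' X : Finset (Fin d → ℤ), (if x ∈ X then ‖φ X‖ₑ * expSizeWeight lam X else 0)
      ≤ ENNReal.ofReal (normL lam φ) := by
  calc _ = ∑' (m : ℕ) (X : Finset (Fin d → ℤ)),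
        if x ∈ X ∧ #X = m + 1 then ‖φ X‖ₑ * ENNReal.ofReal (Real.exp (lam * m)) else 0 := by
        rw [ENNReal.tsum_comm]
        exact tsum_congr fun X =>
          ite_mem_eq_tsum_ite_card x X fun m => ‖φ X‖ₑ * ENNReal.ofReal (Real.exp (lam * m))
    _ = ∑' m : ℕ, (∑' X : Finset (Fin d → ℤ), if x ∈ X ∧ #X = m + 1 then ‖φ X‖ₑ else 0) *
          ENNReal.ofReal (Real.exp (lam * m)) := by
        simp only [← ite_zero_mul, ENNReal.tsum_mul_right]
    _ ≤ ∑' m : ℕ, ENNReal.ofReal (bnd φ m) * ENNReal.ofReal (Real.exp (lam * m)) :=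
        ENNReal.tsum_le_tsum fun m => by gcongr; exact tsum_ite_card_eq_le_bnd φ hsum hbdd x m
    _ = ENNReal.ofReal (normL lam φ) := by
        rw [normL, ENNReal.ofReal_tsum_of_nonneg (fun m => mul_nonneg (Real.exp_pos _).le
          (bnd_nonneg φ hbdd m)) hnorm]
        exact tsum_congr fun m => by rw [ENNReal.ofReal_mul (Real.exp_pos _).le, mul_comm]

end InteractionNorm

lemma enorm_mul_sub_mul_le {R : Type*} [NormedRing R] (a b : R) :
    ‖a * b - b * a‖ₑ ≤ 2 * ‖a‖ₑ * ‖b‖ₑ := by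
  have h : ‖a * b - b * a‖₊ ≤ 2 * ‖a‖₊ * ‖b‖₊ :=
    calc ‖a * b - b * a‖₊ ≤ ‖a * b‖₊ + ‖b * a‖₊ := nnnorm_sub_le _ _
      _ ≤ ‖a‖₊ * ‖b‖₊ + ‖b‖₊ * ‖a‖₊ := add_le_add (nnnorm_mul_le _ _) (nnnorm_mul_le _ _)
      _ = 2 * ‖a‖₊ * ‖b‖₊ := by ring
  simp only [enorm_eq_nnnorm]
  exact_mod_cast h

lemma enorm_I_smul {𝔄 : Type*} [NormedRing 𝔄] [NormedAlgebra ℂ 𝔄] (x : 𝔄) :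
    ‖Complex.I • x‖ₑ = ‖x‖ₑ := by
  rw [enorm_smul, enorm_eq_nnnorm Complex.I, Complex.nnnorm_I, ENNReal.coe_one, one_mul]

section NestedCommutators

variable {V 𝔄 : Type*} [NormedRing 𝔄] [NormedAlgebra ℂ 𝔄]
  (φ : Finset V → 𝔄) (f : 𝔄)

/-- `iⁿ [φ_{Xₙ}, …, [φ_{X₁}, f]]`: the last set of the sequence gives the outermost commutator. -/
noncomputable def nestedComm : (n : ℕ) → (Fin n → Finset V) → 𝔄
  | 0, _ => f
  | n + 1, Xs =>
      Complex.I • (φ (Xs (Fin.last n)) * nestedComm n (Fin.init Xs) -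
        nestedComm n (Fin.init Xs) * φ (Xs (Fin.last n)))

lemma nestedComm_snoc {n : ℕ} (Xs : Fin n → Finset V) (X : Finset V) :
    nestedComm φ f (n + 1) (Fin.snoc Xs X) =
      Complex.I • (φ X * nestedComm φ f n Xs - nestedComm φ f n Xs * φ X) := by
  simp [nestedComm]

variable [DecidableEq V] {φ f} {Alg : Finset V → Subalgebra ℂ 𝔄} {S : Finset V}

lemma nestedComm_mem (hmono : Monotone Alg) (hloc : ∀ X, φ X ∈ Alg X) (hf : f ∈ Alg S) :
    ∀ {n : ℕ} (Xs : Fin n → Finset V), nestedComm φ f n Xs ∈ Alg (chainSupport S Xs)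
  | 0, Xs => by simpa [nestedComm] using hf
  | n + 1, Xs => by
    induction Xs using Fin.snocCases with
    | snoc Xs X =>
      rw [nestedComm_snoc, chainSupport_snoc]
      have hX : φ X ∈ Alg (chainSupport S Xs ∪ X) := hmono subset_union_right (hloc X)
      have hXs : nestedComm φ f n Xs ∈ Alg (chainSupport S Xs ∪ X) :=
        hmono subset_union_left (nestedComm_mem hmono hloc hf Xs)
      exact Subalgebra.smul_mem _ (sub_mem (mul_mem hX hXs) (mul_mem hXs hX)) _

lemma enorm_nestedComm_le (hmono : Monotone Alg) (hloc : ∀ X, φ X ∈ Alg X)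
    (hcomm : ∀ X Y : Finset V, Disjoint X Y → ∀ a ∈ Alg X, ∀ b ∈ Alg Y, a * b = b * a)
    (hf : f ∈ Alg S) :
    ∀ {n : ℕ} (Xs : Fin n → Finset V),
      ‖nestedComm φ f n Xs‖ₑ ≤ 2 ^ n * ‖f‖ₑ * chainWeight (‖φ ·‖ₑ) n S Xs
  | 0, Xs => by simp [nestedComm, chainWeight]
  | n + 1, Xs => by
    induction Xs using Fin.snocCases with
    | snoc Xs X =>
      rw [nestedComm_snoc, chainWeight_snoc, enorm_I_smul]
      split_ifs with hX
      · rw [hcomm _ _ hX _ (hloc X) _ (nestedComm_mem hmono hloc hf Xs), sub_self, enorm_zero]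
        exact zero_le
      · calc _ ≤ 2 * ‖φ X‖ₑ * ‖nestedComm φ f n Xs‖ₑ := enorm_mul_sub_mul_le _ _
          _ ≤ 2 * ‖φ X‖ₑ * (2 ^ n * ‖f‖ₑ * chainWeight (‖φ ·‖ₑ) n S Xs) := by
              gcongr; exact enorm_nestedComm_le hmono hloc hcomm hf Xs
          _ = _ := by ring

end NestedCommutators

section Derivation

variable {𝔄 : Type*} [NormedRing 𝔄] [NormedAlgebra ℂ 𝔄] [CompleteSpace 𝔄]
  {φ : Finset (Fin d → ℤ) → 𝔄} {f : 𝔄}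

lemma Diter_eq_tsum_nestedComm (hsumm : ∀ n, Summable (nestedComm φ f n)) :
    ∀ n, Diter φ n f = ∑' Xs, nestedComm φ f n Xs
  | 0 => by simp [Diter, nestedComm, tsum_fintype]
  | n + 1 => by
    have hg := hsumm n
    have hprod : Summable fun p : Finset (Fin d → ℤ) × (Fin n → Finset (Fin d → ℤ)) =>
        nestedComm φ f (n + 1) (Fin.snoc p.2 p.1) :=
      (Fin.snocEquiv fun _ => Finset (Fin d → ℤ)).summable_iff.2 (hsumm (n + 1))
    calc Diter φ (n + 1) f
        = Complex.I • ∑' X, (φ X * ∑' Xs, nestedComm φ f n Xs -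
            (∑' Xs, nestedComm φ f n Xs) * φ X) := by
          simp only [Diter, Diter_eq_tsum_nestedComm hsumm n]
      _ = ∑' (X) (Xs : Fin n → Finset (Fin d → ℤ)), nestedComm φ f (n + 1) (Fin.snoc Xs X) := by
          rw [← tsum_const_smul'']
          refine tsum_congr fun X => ?_
          simp only [nestedComm_snoc, tsum_const_smul'']
          rw [← hg.tsum_mul_left, ← hg.tsum_mul_right, (hg.mul_left _).tsum_sub (hg.mul_right _)]
      _ = ∑' p : Finset (Fin d → ℤ) × (Fin n → Finset (Fin d → ℤ)),
            nestedComm φ f (n + 1) (Fin.snoc p.2 p.1) :=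
          (hprod.tsum_prod' hprod.prod_factor).symm
      _ = ∑' Ys, nestedComm φ f (n + 1) Ys :=
          (Fin.snocEquiv fun _ => Finset (Fin d → ℤ)).tsum_eq _

lemma enorm_Diter_le {lam : ℝ} (hlam : 0 < lam)
    (hsum : ∀ (x : Fin d → ℤ) (n : ℕ),
      Summable fun X : {X : Finset (Fin d → ℤ) // x ∈ X ∧ X.card = n + 1} => ‖φ X.1‖)
    (hbdd : ∀ n : ℕ, BddAbove (Set.range fun x : Fin d → ℤ =>
      ∑' X : {X : Finset (Fin d → ℤ) // x ∈ X ∧ X.card = n + 1}, ‖φ X.1‖))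
    (hnorm : Summable fun n : ℕ => Real.exp (lam * n) * bnd φ n)
    {Alg : Finset (Fin d → ℤ) → Subalgebra ℂ 𝔄} (hmono : Monotone Alg)
    (hloc : ∀ X, φ X ∈ Alg X)
    (hcomm : ∀ X Y : Finset (Fin d → ℤ), Disjoint X Y →
      ∀ a ∈ Alg X, ∀ b ∈ Alg Y, a * b = b * a)
    {Λ : Finset (Fin d → ℤ)} (hf : f ∈ Alg Λ) (n : ℕ) :
    ‖Diter φ n f‖ₑ ≤ 2 ^ n * ‖f‖ₑ * (n.factorial *
      (ENNReal.ofReal (normL lam φ) / ENNReal.ofReal lam) ^ n *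
        ENNReal.ofReal (Real.exp (lam * #Λ))) := by
  have hbound : ∀ n, ∑' Xs : Fin n → Finset (Fin d → ℤ), ‖nestedComm φ f n Xs‖ₑ ≤
      2 ^ n * ‖f‖ₑ * (n.factorial * (ENNReal.ofReal (normL lam φ) / ENNReal.ofReal lam) ^ n *
        ENNReal.ofReal (Real.exp (lam * #Λ))) := by
    intro n
    refine (ENNReal.tsum_le_tsum (enorm_nestedComm_le hmono hloc hcomm hf)).trans ?_
    rw [ENNReal.tsum_mul_left]
    gcongr
    simpa using tsum_chainWeight_mul_pow_le _ hlam (tsum_ite_mem_le_normL φ hsum hbdd hnorm) n 0 Λ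
  have hsumm : ∀ n, Summable (nestedComm φ f n) := fun n =>
    Summable.of_enorm ((hbound n).trans_lt (by finiteness)).ne
  rw [Diter_eq_tsum_nestedComm hsumm]
  exact enorm_tsum_le_tsum_enorm.trans (hbound n)

lemma norm_Diter_le {lam : ℝ} (hlam : 0 < lam)
    (hsum : ∀ (x : Fin d → ℤ) (n : ℕ),
      Summable fun X : {X : Finset (Fin d → ℤ) // x ∈ X ∧ X.card = n + 1} => ‖φ X.1‖)
    (hbdd : ∀ n : ℕ, BddAbove (Set.range fun x : Fin d → ℤ =>
      ∑' X : {X : Finset (Fin d → ℤ) // x ∈ X ∧ X.card = n + 1}, ‖φ X.1‖))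
    (hnorm : Summable fun n : ℕ => Real.exp (lam * n) * bnd φ n)
    {Alg : Finset (Fin d → ℤ) → Subalgebra ℂ 𝔄} (hmono : Monotone Alg)
    (hloc : ∀ X, φ X ∈ Alg X)
    (hcomm : ∀ X Y : Finset (Fin d → ℤ), Disjoint X Y →
      ∀ a ∈ Alg X, ∀ b ∈ Alg Y, a * b = b * a)
    {Λ : Finset (Fin d → ℤ)} (hf : f ∈ Alg Λ) (n : ℕ) :
    ‖Diter φ n f‖ ≤
      (2 * normL lam φ / lam) ^ n * n.factorial * Real.exp (lam * Λ.card) * ‖f‖ := by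
  have hK := normL_nonneg φ hbdd lam
  rw [← ENNReal.ofReal_le_ofReal_iff (by positivity), ofReal_norm]
  refine (enorm_Diter_le hlam hsum hbdd hnorm hmono hloc hcomm hf n).trans_eq ?_
  rw [ENNReal.ofReal_mul (by positivity), ENNReal.ofReal_mul (by positivity),
    ENNReal.ofReal_mul (by positivity), ENNReal.ofReal_pow (by positivity), mul_div_assoc,
    ENNReal.ofReal_mul zero_le_two, ENNReal.ofReal_div_of_pos hlam, ENNReal.ofReal_ofNat,
    ENNReal.ofReal_natCast, ofReal_norm]
  ring

end Derivation

lemma summable_norm_pow_div_factorial_smul {E : Type*} [SeminormedAddCommGroup E]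
    [NormedSpace ℝ E] {a : ℕ → E} {R C t : ℝ} (hR : 0 ≤ R)
    (ha : ∀ n, ‖a n‖ ≤ R ^ n * n.factorial * C) (ht : |t| * R < 1) :
    Summable fun n => ‖(t ^ n / n.factorial) • a n‖ := by
  refine ((summable_geometric_of_lt_one (by positivity) ht).mul_right C).of_nonneg_of_le
    (fun n => norm_nonneg _) fun n => ?_
  have hfac : (0 : ℝ) < n.factorial := by positivity
  calc ‖(t ^ n / n.factorial) • a n‖ = |t| ^ n / n.factorial * ‖a n‖ := by
        rw [norm_smul, Real.norm_eq_abs, abs_div, abs_pow, Nat.abs_cast]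
    _ ≤ |t| ^ n / n.factorial * (R ^ n * n.factorial * C) := by gcongr; exact ha n
    _ = (|t| * R) ^ n * C := by field_simp; ring

theorem derivation_iterate_bound_general [CompleteSpace A]
    (φ : Finset (Fin d → ℤ) → A)
    (lam : ℝ) (hlam : 0 < lam)
    (hsum : ∀ (x : Fin d → ℤ) (n : ℕ),
      Summable fun X : {X : Finset (Fin d → ℤ) // x ∈ X ∧ X.card = n + 1} => ‖φ X.1‖)
    (hbdd : ∀ n : ℕ, BddAbove (Set.range fun x : Fin d → ℤ =>
      ∑' X : {X : Finset (Fin d → ℤ) // x ∈ X ∧ X.card = n + 1}, ‖φ X.1‖))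
    (hnorm : Summable fun n : ℕ => Real.exp (lam * n) * bnd φ n)
    (Alg : Finset (Fin d → ℤ) → Subalgebra ℂ A)
    (hmono : ∀ X Y, X ⊆ Y → Alg X ≤ Alg Y)
    (hloc : ∀ X, φ X ∈ Alg X)
    (hcomm : ∀ X Y : Finset (Fin d → ℤ), Disjoint X Y →
      ∀ a ∈ Alg X, ∀ b ∈ Alg Y, a * b = b * a)
    (Λ : Finset (Fin d → ℤ)) (f : A) (hf : f ∈ Alg Λ) :
    (∀ n : ℕ, 1 ≤ n →
      ‖Diter φ n f‖ ≤
        (2 * normL lam φ / lam) ^ n * n.factorial * Real.exp (lam * Λ.card) * ‖f‖) ∧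
    (∀ t : ℝ, |t| < lam / (2 * normL lam φ) →
      Summable fun n : ℕ => ‖(t ^ n / (n.factorial : ℝ)) • Diter φ n f‖) := by
  have hbound := norm_Diter_le hlam hsum hbdd hnorm (fun X Y => hmono X Y) hloc hcomm hf
  refine ⟨fun n _ => hbound n, fun t ht => ?_⟩
  have hK : 0 < normL lam φ := by
    refine (normL_nonneg φ hbdd lam).lt_of_ne fun hK => ?_
    rw [← hK, mul_zero, div_zero] at ht
    exact (abs_nonneg t).not_gt ht
  have hrate : |t| * (2 * normL lam φ / lam) < 1 := by
    rw [lt_div_iff₀ (by positivity)] at ht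
    rwa [← mul_div_assoc, div_lt_one hlam]
  exact summable_norm_pow_div_factorial_smul (by positivity) (fun n => (hbound n).trans_eq
    (mul_assoc _ _ _)) hrate

/-- For an interaction with ‖φ‖_λ < ∞ and f localized in a finite region Λ,
the iterated derivation satisfies
‖(D^φ)ⁿ(f)‖ ≤ (2‖φ‖_λ/λ)ⁿ n! e^{λ|Λ|} ‖f‖; in particular the series
Σ tⁿ(D^φ)ⁿ(f)/n! has radius of convergence at least λ/(2‖φ‖_λ). -/
theorem derivation_iterate_bound [CompleteSpace A]
    (φ : Finset (Fin d → ℤ) → A) (hsa : ∀ X, star (φ X) = φ X)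
    (lam : ℝ) (hlam : 0 < lam)
    (hsum : ∀ (x : Fin d → ℤ) (n : ℕ),
      Summable fun X : {X : Finset (Fin d → ℤ) // x ∈ X ∧ X.card = n + 1} => ‖φ X.1‖)
    (hbdd : ∀ n : ℕ, BddAbove (Set.range fun x : Fin d → ℤ =>
      ∑' X : {X : Finset (Fin d → ℤ) // x ∈ X ∧ X.card = n + 1}, ‖φ X.1‖))
    (hnorm : Summable fun n : ℕ => Real.exp (lam * n) * bnd φ n)
    (Alg : Finset (Fin d → ℤ) → Subalgebra ℂ A)
    (hmono : ∀ X Y, X ⊆ Y → Alg X ≤ Alg Y)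
    (hloc : ∀ X, φ X ∈ Alg X)
    (hcomm : ∀ X Y : Finset (Fin d → ℤ), Disjoint X Y →
      ∀ a ∈ Alg X, ∀ b ∈ Alg Y, a * b = b * a)
    (Λ : Finset (Fin d → ℤ)) (f : A) (hf : f ∈ Alg Λ) :
    (∀ n : ℕ, 1 ≤ n →
      ‖Diter φ n f‖ ≤
        (2 * normL lam φ / lam) ^ n * n.factorial * Real.exp (lam * Λ.card) * ‖f‖) ∧
    (∀ t : ℝ, |t| < lam / (2 * normL lam φ) →
      Summable fun n : ℕ => ‖(t ^ n / (n.factorial : ℝ)) • Diter φ n f‖) :=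
  derivation_iterate_bound_general φ lam hlam hsum hbdd hnorm Alg hmono hloc hcomm Λ f hf

end Interactions
end
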